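/- arXiv:2504.11751 — 3 statements merged into one kernel-verified Lean document; each statement's English description precedes it below -/
import Mathlib

section
/- For every flow F on X and every point p ∈ X, every point lying both on the forward orbit of p and in the first prolongational limit set of p is non-wandering: O⁺(p) ∩ Λ¹(p) ⊆ NW_F. -/
open Set Filter Topology

/-- A (continuous-time) flow on a topological space. -/
def IsFlow {X : Type*} [TopologicalSpace X] (F : ℝ → X → X) : Prop :=
  Continuous (fun q : ℝ × X => F q.1 q.2) ∧ (∀ x, F 0 x = x) ∧
    ∀ t s x, F t (F s x) = F (t + s) x

/-- The forward orbit O⁺(p). -/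
def fwdOrbit {X : Type*} (F : ℝ → X → X) (p : X) : Set X :=
  {q | ∃ t : ℝ, 0 ≤ t ∧ F t p = q}

/-- The backward orbit O⁻(p). -/
def bwdOrbit {X : Type*} (F : ℝ → X → X) (p : X) : Set X :=
  {q | ∃ t : ℝ, t ≤ 0 ∧ F t p = q}

/-- The orbit O(p) = O⁻(p) ∪ O⁺(p). -/
def flowOrbit {X : Type*} (F : ℝ → X → X) (p : X) : Set X :=
  bwdOrbit F p ∪ fwdOrbit F p

/-- The orbit relation O_F. -/
def orbitRel {X : Type*} (F : ℝ → X → X) : Set (X × X) :=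
  {z | z.2 ∈ fwdOrbit F z.1}

/-- The prolongational relation P_F: the closure of the orbit relation. -/
def prolongRel {X : Type*} [TopologicalSpace X] (F : ℝ → X → X) : Set (X × X) :=
  closure (orbitRel F)

/-- Down(p) = {q | (p,q) ∈ P_F}. -/
def downSet {X : Type*} [TopologicalSpace X] (F : ℝ → X → X) (p : X) : Set X :=
  {q | (p, q) ∈ prolongRel F}

/-- The first prolongational limit set Λ¹(p). -/
def lambda1 {X : Type*} [MetricSpace X] (F : ℝ → X → X) (p : X) : Set X :=
  {q | ∀ ε > (0 : ℝ), ∀ T > (0 : ℝ), ∃ x : X, ∃ t : ℝ,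
    T ≤ t ∧ dist x p < ε ∧ dist (F t x) q < ε}

/-- The first prolongation D¹(p). -/
def prolong1 {X : Type*} [MetricSpace X] (F : ℝ → X → X) (p : X) : Set X :=
  {q | ∀ ε > (0 : ℝ), ∃ x : X, ∃ t : ℝ, 0 < t ∧ dist x p < ε ∧ dist (F t x) q < ε}

/-- The set NW_F of non-wandering points. -/
def nonWanderingSet {X : Type*} [MetricSpace X] (F : ℝ → X → X) : Set X :=
  {p | p ∈ lambda1 F p}

/-- A flow is wandering when it has no non-wandering point. -/
def IsWandering {X : Type*} [MetricSpace X] (F : ℝ → X → X) : Prop :=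
  nonWanderingSet F = ∅

/-- The ω-limit set of p. -/
def omegaLimitSet {X : Type*} [TopologicalSpace X] (F : ℝ → X → X) (p : X) : Set X :=
  {q | ∃ t : ℕ → ℝ, Tendsto t atTop atTop ∧ Tendsto (fun n => F (t n) p) atTop (𝓝 q)}

/-- The α-limit set of p. -/
def alphaLimitSet {X : Type*} [TopologicalSpace X] (F : ℝ → X → X) (p : X) : Set X :=
  {q | ∃ t : ℕ → ℝ, Tendsto t atTop atBot ∧ Tendsto (fun n => F (t n) p) atTop (𝓝 q)}

/-- Every point lying both on the forward orbit of p and in Λ¹(p) is non-wandering. -/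
theorem stmt_2 {X : Type*} [MetricSpace X] [LocallyCompactSpace X] [ConnectedSpace X]
    (F : ℝ → X → X) (hF : IsFlow F) (p : X) :
    fwdOrbit F p ∩ lambda1 F p ⊆ nonWanderingSet F := by
  obtain ⟨hcont, hzero, hadd⟩ := hF
  rintro q ⟨⟨s, hs, rfl⟩, hq⟩ ε hε T hT
  have hcs : Continuous fun x => F s x := hcont.comp (continuous_const.prodMk continuous_id)
  obtain ⟨δ, hδ, hδball⟩ := Metric.continuous_iff.mp hcs p ε hε
  obtain ⟨x, t, ht, hxp, hFt⟩ := hq (min ε δ) (lt_min hε hδ) (T + s) (by linarith)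
  refine ⟨F s x, t - s, by linarith, hδball x (lt_of_lt_of_le hxp (min_le_right _ _)), ?_⟩
  rw [hadd, sub_add_cancel]
  exact lt_of_lt_of_le hFt (min_le_left _ _)
end

section
/- For every flow F on X, the relation A_F = {(x, y) ∈ X × X : L(x) ≥ L(y) for every Lyapunov function L of F} is an F-stream, and it is the smallest F-stream: A_F ⊆ D for every F-stream D. -/
open Set Filter Topology

/-- A (continuous) Lyapunov function for the flow F. -/
def IsLyapunov {X : Type*} [TopologicalSpace X] (F : ℝ → X → X) (L : X → ℝ) : Prop :=
  Continuous L ∧ ∀ p : X, ∀ q ∈ fwdOrbit F p, L q ≤ L p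

/-- The Auslander relation A_F. -/
def auslanderRel {X : Type*} [MetricSpace X] (F : ℝ → X → X) : Set (X × X) :=
  {z | ∀ L : X → ℝ, IsLyapunov F L → L z.2 ≤ L z.1}

/-- An F-stream: a reflexive, transitive, closed relation containing P_F. -/
def IsStream {X : Type*} [MetricSpace X] (F : ℝ → X → X) (D : Set (X × X)) : Prop :=
  (∀ x : X, (x, x) ∈ D) ∧
  (∀ x y z : X, (x, y) ∈ D → (y, z) ∈ D → (x, z) ∈ D) ∧
  IsClosed D ∧ prolongRel F ⊆ D

/-!
Lyapunov functions are continuous and nonincreasing along orbits, hence along their closure `P_F`,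
so `A_F` is a closed preorder containing `P_F`.

Conversely, let `D` be an `F`-stream and `(x, y) ∉ D`. The `D`-future of `x` is a closed up-set,
the `D`-past of `y` a closed down-set, and they are disjoint by transitivity. A connected locally
compact metric space is σ-compact, and on a locally compact σ-compact space a closed preorder is
normal in Nachbin's sense: disjoint closed up- and down-sets have disjoint open up- and
down-neighbourhoods. These are grown one piece of a compact exhaustion at a time, by adding the
`D`-future (resp. past) of a compact neighbourhood that avoids the other set. Urysohn's dyadic
construction run through such neighbourhoods yields a continuous `f`, nonincreasing along `D`, with
`f x = 0` and `f y = 1`: a Lyapunov function witnessing `(x, y) ∉ A_F`.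
-/

section

variable {X : Type*} [TopologicalSpace X]

def chainHull {ι : Type*} (v : ι → Set X) (x₀ : X) : ℕ → Set X
  | 0 => {x₀}
  | n + 1 => ⋃ (i) (_ : (v i ∩ chainHull v x₀ n).Nonempty), closure (v i)

theorem sigmaCompactSpace_of_connected [R1Space X] [LocallyCompactSpace X] [ParacompactSpace X]
    [ConnectedSpace X] : SigmaCompactSpace X := by
  choose K hK hKx using fun x : X => exists_compact_mem_nhds x
  obtain ⟨v, hvo, hcov, hlf, hvK⟩ := precise_refinement (fun x => interior (K x))
    (fun _ => isOpen_interior)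
    (iUnion_eq_univ_iff.2 fun x => ⟨x, mem_interior_iff_mem_nhds.2 (hKx x)⟩)
  have hvc : ∀ i, IsCompact (closure (v i)) :=
    fun i => (hK i).closure_of_subset ((hvK i).trans interior_subset)
  obtain ⟨x₀⟩ := ‹ConnectedSpace X›.toNonempty
  set S := chainHull v x₀
  have hSc (n : ℕ) : IsCompact (S n) := by
    induction n with
    | zero => exact isCompact_singleton
    | succ n ih =>
      exact (hlf.finite_nonempty_inter_compact ih).isCompact_biUnion fun i _ => hvc i
  have hstep : ∀ i n, (v i ∩ S n).Nonempty → v i ⊆ S (n + 1) := fun i n h =>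
    subset_closure.trans (subset_biUnion_of_mem (u := fun i => closure (v i)) h)
  have hmem : ∀ x, ∃ i, x ∈ v i := fun x => mem_iUnion.1 (hcov ▸ mem_univ x)
  have hclopen : IsClopen (⋃ n, S n) := by
    constructor
    · refine isClosed_of_closure_subset fun x hx => ?_
      obtain ⟨i, hxi⟩ := hmem x
      obtain ⟨y, hyi, hyS⟩ := mem_closure_iff.1 hx (v i) (hvo i) hxi
      obtain ⟨n, hyn⟩ := mem_iUnion.1 hyS
      exact mem_iUnion.2 ⟨n + 1, hstep i n ⟨y, hyi, hyn⟩ hxi⟩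
    · refine isOpen_iff_forall_mem_open.2 fun x hx => ?_
      obtain ⟨n, hxn⟩ := mem_iUnion.1 hx
      obtain ⟨i, hxi⟩ := hmem x
      exact ⟨v i, (hstep i n ⟨x, hxi, hxn⟩).trans (subset_iUnion S _), hvo i, hxi⟩
  exact ⟨⟨S, hSc, hclopen.eq_univ ⟨x₀, mem_iUnion.2 ⟨0, rfl⟩⟩⟩⟩

theorem isOpen_iUnion_of_inter_subset_interior {a K : ℕ → Set X} (ha : Monotone a)
    (hK : Monotone K) (hcov : ⋃ n, K n = univ) (h : ∀ n, a n ∩ K n ⊆ interior (a (n + 1))) :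
    IsOpen (⋃ n, a n) := by
  refine isOpen_iff_forall_mem_open.2 fun x hx => ?_
  obtain ⟨n, hxn⟩ := mem_iUnion.1 hx
  obtain ⟨m, hxm⟩ := mem_iUnion.1 (hcov ▸ mem_univ x)
  have hx' : x ∈ a (max n m) ∩ K (max n m) :=
    ⟨ha (le_max_left n m) hxn, hK (le_max_right n m) hxm⟩
  exact ⟨_, interior_subset.trans (subset_iUnion a _), isOpen_interior, h _ hx'⟩

end

namespace SetRel

variable {X : Type*} {D : SetRel X X}

instance isRefl_inv [D.IsRefl] : D.inv.IsRefl := ⟨fun x => D.refl x⟩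

instance isTrans_inv [D.IsTrans] : D.inv.IsTrans := ⟨fun _ _ _ h₁ h₂ => D.trans h₂ h₁⟩

theorem image_image_subset [D.IsTrans] (s : Set X) : D.image (D.image s) ⊆ D.image s := by
  rintro z ⟨y, ⟨x, hx, hxy⟩, hyz⟩
  exact ⟨x, hx, D.trans hxy hyz⟩

theorem preimage_compl_subset_compl {s : Set X} (h : D.image s ⊆ s) : D.preimage sᶜ ⊆ sᶜ :=
  fun x ⟨_, hy, hxy⟩ hx => hy (h ⟨x, hx, hxy⟩)

theorem image_compl_subset_compl {s : Set X} (h : D.preimage s ⊆ s) : D.image sᶜ ⊆ sᶜ :=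
  preimage_compl_subset_compl (D := D.inv) h

variable [TopologicalSpace X]

theorem isClosed_inv (hD : IsClosed D) : IsClosed D.inv :=
  hD.preimage continuous_swap

theorem isClosed_image_of_isCompact (hD : IsClosed D) {K : Set X} (hK : IsCompact K) :
    IsClosed (D.image K) := by
  have : CompactSpace K := isCompact_iff_compactSpace.mp hK
  convert isClosedMap_snd_of_compactSpace _
    (hD.preimage (continuous_subtype_val.prodMap continuous_id :
      Continuous fun p : K × X => ((p.1 : X), p.2))) using 1
  ext y
  simp [SetRel.image]

theorem isClosed_preimage_of_isCompact (hD : IsClosed D) {K : Set X} (hK : IsCompact K) :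
    IsClosed (D.preimage K) :=
  isClosed_image_of_isCompact (isClosed_inv hD) hK

variable (D) in
structure IsUpDownPair (A B : Set X) : Prop where
  isClosed_left : IsClosed A
  image_subset : D.image A ⊆ A
  isClosed_right : IsClosed B
  preimage_subset : D.preimage B ⊆ B
  disjoint : Disjoint A B

theorem IsUpDownPair.symm {A B : Set X} (h : IsUpDownPair D A B) : IsUpDownPair D.inv B A :=
  ⟨h.isClosed_right, h.preimage_subset, h.isClosed_left, h.image_subset, h.disjoint.symm⟩

variable (D) in
def IsOrderNormal : Prop :=
  ∀ ⦃A B : Set X⦄, IsUpDownPair D A B → ∃ U V : Set X, IsOpen U ∧ IsOpen V ∧ A ⊆ U ∧ B ⊆ V ∧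
    D.image U ⊆ U ∧ D.preimage V ⊆ V ∧ Disjoint U V

theorem isUpDownPair_image_preimage_singleton [D.IsTrans] (hD : IsClosed D) {x y : X}
    (hxy : (x, y) ∉ D) : IsUpDownPair D (D.image {x}) (D.preimage {y}) where
  isClosed_left := isClosed_image_of_isCompact hD isCompact_singleton
  image_subset := image_image_subset _
  isClosed_right := isClosed_preimage_of_isCompact hD isCompact_singleton
  preimage_subset := image_image_subset (D := D.inv) _
  disjoint := Set.disjoint_left.2 fun _ ⟨_, hx, hxz⟩ ⟨_, hy, hzy⟩ =>
    hxy (mem_singleton_iff.1 hx ▸ mem_singleton_iff.1 hy ▸ D.trans hxz hzy)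

section LocallyCompact

variable [RegularSpace X] [LocallyCompactSpace X]

theorem IsUpDownPair.exists_left_nhds [D.IsRefl] [D.IsTrans] (hD : IsClosed D) {A B K : Set X}
    (h : IsUpDownPair D A B) (hK : IsCompact K) :
    ∃ A', IsUpDownPair D A' B ∧ A ⊆ A' ∧ A ∩ K ⊆ interior A' := by
  obtain ⟨W, hWo, hAW, hWB, hWc⟩ := exists_open_between_and_isCompact_closure
    (hK.inter_left h.isClosed_left) h.isClosed_right.isOpen_compl
    fun x hx => Set.disjoint_left.1 h.disjoint hx.1
  refine ⟨A ∪ D.image (closure W), ⟨h.isClosed_left.union (isClosed_image_of_isCompact hD hWc),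
    ?_, h.isClosed_right, h.preimage_subset, ?_⟩, subset_union_left, ?_⟩
  · rw [image_union]
    exact union_subset_union h.image_subset (image_image_subset _)
  · refine disjoint_union_left.2 ⟨h.disjoint, Set.disjoint_left.2 ?_⟩
    rintro y ⟨x, hx, hxy⟩ hy
    exact hWB hx (h.preimage_subset ⟨y, hy, hxy⟩)
  · exact hAW.trans <| interior_maximal
      ((subset_closure.trans (self_subset_image _)).trans subset_union_right) hWo

theorem IsUpDownPair.exists_nhds [D.IsRefl] [D.IsTrans] (hD : IsClosed D) {A B K : Set X}
    (h : IsUpDownPair D A B) (hK : IsCompact K) :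
    ∃ p : Set X × Set X, IsUpDownPair D p.1 p.2 ∧ A ⊆ p.1 ∧ B ⊆ p.2 ∧
      A ∩ K ⊆ interior p.1 ∧ B ∩ K ⊆ interior p.2 := by
  obtain ⟨A', hA', hAA', hAK⟩ := h.exists_left_nhds hD hK
  obtain ⟨B', hB', hBB', hBK⟩ := hA'.symm.exists_left_nhds (isClosed_inv hD) hK
  exact ⟨(A', B'), hB'.symm, hAA', hBB', hAK, hBK⟩

theorem isOrderNormal_of_sigmaCompactSpace [SigmaCompactSpace X] [D.IsRefl] [D.IsTrans]
    (hD : IsClosed D) : IsOrderNormal D := by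
  intro A B hAB
  choose! next hnext using fun (n : ℕ) (p : Set X × Set X) (hp : IsUpDownPair D p.1 p.2) =>
    hp.exists_nhds hD (isCompact_compactCovering X n)
  let s : ℕ → Set X × Set X := fun n => Nat.rec (A, B) next n
  have hs (n : ℕ) : IsUpDownPair D (s n).1 (s n).2 := by
    induction n with
    | zero => exact hAB
    | succ n ih => exact (hnext n _ ih).1
  choose _ hsub₁ hsub₂ hint₁ hint₂ using fun n => hnext n _ (hs n)
  have hmono₁ : Monotone fun n => (s n).1 := monotone_nat_of_le_succ hsub₁
  have hmono₂ : Monotone fun n => (s n).2 := monotone_nat_of_le_succ hsub₂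
  refine ⟨⋃ n, (s n).1, ⋃ n, (s n).2,
    isOpen_iUnion_of_inter_subset_interior hmono₁ (compactCovering_subset X)
      (iUnion_compactCovering X) hint₁,
    isOpen_iUnion_of_inter_subset_interior hmono₂ (compactCovering_subset X)
      (iUnion_compactCovering X) hint₂,
    subset_iUnion (fun n => (s n).1) 0, subset_iUnion (fun n => (s n).2) 0, ?_, ?_, ?_⟩
  · rw [image_iUnion]
    exact iUnion_mono fun n => (hs n).image_subset
  · rw [preimage_iUnion]
    exact iUnion_mono fun n => (hs n).preimage_subset
  · refine disjoint_iUnion_left.2 fun n => disjoint_iUnion_right.2 fun m => ?_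
    exact (hs (max n m)).disjoint.mono (hmono₁ (le_max_left n m)) (hmono₂ (le_max_right n m))

end LocallyCompact

theorem IsOrderNormal.exists_continuous_antitone (hN : IsOrderNormal D) {A B : Set X}
    (hAB : IsUpDownPair D A B) :
    ∃ f : X → ℝ, Continuous f ∧ (∀ x y, (x, y) ∈ D → f y ≤ f x) ∧ EqOn f 0 A ∧ EqOn f 1 B := by
  -- `Urysohns.CU` only refines pairs `C ⊆ U` satisfying `P`. Every `U` being an up-set makes every
  -- approximation antitone along `D`; the closed up-set `K` between `C` and `U` is what allows
  -- refining again, since the closure of an open up-set need not be an up-set.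
  let P : Set X → Set X → Prop := fun C U =>
    D.image U ⊆ U ∧ ∃ K, IsClosed K ∧ D.image K ⊆ K ∧ C ⊆ K ∧ K ⊆ U
  have hP {C U : Set X} (_ : IsClosed C) (hCU : P C U) (hU : IsOpen U) (_ : C ⊆ U) :
      ∃ W, IsOpen W ∧ C ⊆ W ∧ closure W ⊆ U ∧ P C W ∧ P (closure W) U := by
    obtain ⟨hUD, K, hK, hKD, hCK, hKU⟩ := hCU
    obtain ⟨W, V, hW, hV, hKW, hUV, hWD, hVD, hWV⟩ := hN ⟨hK, hKD, hU.isClosed_compl,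
      preimage_compl_subset_compl hUD, Set.disjoint_compl_right_iff_subset.2 hKU⟩
    have hWV' : closure W ⊆ Vᶜ := closure_minimal hWV.subset_compl_right hV.isClosed_compl
    exact ⟨W, hW, hCK.trans hKW, hWV'.trans (compl_subset_comm.1 hUV),
      ⟨hWD, K, hK, hKD, hCK, hKW⟩,
      ⟨hUD, Vᶜ, hV.isClosed_compl, image_compl_subset_compl hVD, hWV', compl_subset_comm.1 hUV⟩⟩
  let c : Urysohns.CU P :=
    { C := A
      U := Bᶜ
      P_C_U := ⟨image_compl_subset_compl hAB.preimage_subset, A, hAB.isClosed_left,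
        hAB.image_subset, subset_rfl, hAB.disjoint.subset_compl_right⟩
      closed_C := hAB.isClosed_left
      open_U := hAB.isClosed_right.isOpen_compl
      subset := hAB.disjoint.subset_compl_right
      hP := hP }
  have hanti (n : ℕ) (c : Urysohns.CU P) {x y : X} (hxy : (x, y) ∈ D) :
      c.approx n y ≤ c.approx n x := by
    induction n generalizing c with
    | zero =>
      by_cases hy : y ∈ c.U
      · exact (indicator_of_notMem (notMem_compl_iff.2 hy) _).trans_le
          (indicator_nonneg (fun _ _ => zero_le_one) _)
      · have hx : x ∉ c.U := fun hx => hy (c.P_C_U.1 ⟨x, hx, hxy⟩)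
        exact ((indicator_of_mem (mem_compl hy) 1).trans
          (indicator_of_mem (mem_compl hx) 1).symm).le
    | succ n ih => exact midpoint_le_midpoint (ih c.left) (ih c.right)
  exact ⟨c.lim, c.continuous_lim,
    fun x y hxy => ciSup_mono (c.bddAbove_range_approx x) fun n => hanti n c hxy,
    c.lim_of_mem_C, fun x hx => c.lim_of_notMem_U x (not_not_intro hx)⟩

end SetRel

section Auslander

variable {X : Type*} [MetricSpace X] {F : ℝ → X → X}

theorem isStream_auslanderRel (F : ℝ → X → X) : IsStream F (auslanderRel F) := by
  have hclosed (L : X → ℝ) (hL : IsLyapunov F L) : IsClosed {z : X × X | L z.2 ≤ L z.1} :=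
    isClosed_le (hL.1.comp continuous_snd) (hL.1.comp continuous_fst)
  have hAF : IsClosed (auslanderRel F) := by
    simp only [auslanderRel, ofPred_forall]
    exact isClosed_iInter fun L => isClosed_iInter fun hL => hclosed L hL
  refine ⟨fun x L _ => le_rfl, fun x y z hxy hyz L hL => (hyz L hL).trans (hxy L hL), hAF, ?_⟩
  exact closure_minimal (fun z hz L hL => hL.2 z.1 z.2 hz) hAF

theorem IsStream.isLyapunov_of_antitone {D : Set (X × X)} (hD : IsStream F D) {f : X → ℝ}
    (hf : Continuous f) (hfD : ∀ x y, (x, y) ∈ D → f y ≤ f x) : IsLyapunov F f :=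
  ⟨hf, fun p q hq => hfD p q (hD.2.2.2 (subset_closure hq))⟩

theorem auslanderRel_subset_of_isStream [LocallyCompactSpace X] [SigmaCompactSpace X]
    {D : Set (X × X)} (hD : IsStream F D) : auslanderRel F ⊆ D := by
  have : SetRel.IsRefl D := ⟨hD.1⟩
  have : SetRel.IsTrans D := ⟨hD.2.1⟩
  have hclosed : IsClosed D := hD.2.2.1
  rintro ⟨x, y⟩ hxy
  by_contra hxyD
  obtain ⟨f, hf, hfD, hfx, hfy⟩ :=
    (SetRel.isOrderNormal_of_sigmaCompactSpace hclosed).exists_continuous_antitone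
      (SetRel.isUpDownPair_image_preimage_singleton hclosed hxyD)
  have hle := hxy f (hD.isLyapunov_of_antitone hf hfD)
  rw [hfx ⟨x, rfl, hD.1 x⟩, hfy ⟨y, rfl, hD.1 y⟩] at hle
  norm_num at hle

end Auslander

theorem stmt_4_general {X : Type*} [MetricSpace X] [LocallyCompactSpace X] [ConnectedSpace X]
    (F : ℝ → X → X) :
    IsStream F (auslanderRel F) ∧
      ∀ D : Set (X × X), IsStream F D → auslanderRel F ⊆ D := by
  have : SigmaCompactSpace X := sigmaCompactSpace_of_connected
  exact ⟨isStream_auslanderRel F, fun D hD => auslanderRel_subset_of_isStream hD⟩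

/-- A_F is an F-stream and it is the smallest F-stream. -/
theorem stmt_4 {X : Type*} [MetricSpace X] [LocallyCompactSpace X] [ConnectedSpace X]
    (F : ℝ → X → X) (hF : IsFlow F) :
    IsStream F (auslanderRel F) ∧
      ∀ D : Set (X × X), IsStream F D → auslanderRel F ⊆ D :=
  stmt_4_general F
end

section
/- Let F be a regular flow on ℝ² and let s₁, s₂ be two distinct orbits of F. Then s₁ is inseparable from s₂ if and only if, possibly after exchanging s₁ and s₂, for every p ∈ s₁ and every q ∈ s₂ one has (p, q) ∈ P_F. -/
open Set Filter Topology

/-- The plane with the Euclidean distance. -/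
abbrev Plane := EuclideanSpace ℝ (Fin 2)

/-- A flow on the plane is regular if near every point it is locally topologically
equivalent to the flow of a constant vector field: there is a homeomorphism of a
neighborhood onto an open set sending the local orbits into horizontal lines. -/
def IsRegularFlow (F : ℝ → Plane → Plane) : Prop :=
  ∀ p : Plane, ∃ U V : Set Plane, IsOpen U ∧ IsOpen V ∧ p ∈ U ∧
    ∃ φ : U ≃ₜ V, ∀ q y : U, (y : Plane) ∈ flowOrbit F (q : Plane) →
      (φ y : Plane) 1 = (φ q : Plane) 1

/-- A set is saturated if it contains the full orbit of each of its points. -/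
def FlowSaturated (F : ℝ → Plane → Plane) (A : Set Plane) : Prop :=
  ∀ p ∈ A, flowOrbit F p ⊆ A

/-- Two (distinct) orbits are inseparable if any two saturated open sets containing
them respectively must intersect. -/
def OrbitsInseparable (F : ℝ → Plane → Plane) (s₁ s₂ : Set Plane) : Prop :=
  ∀ U₁ U₂ : Set Plane, IsOpen U₁ → IsOpen U₂ → FlowSaturated F U₁ → FlowSaturated F U₂ →
    s₁ ⊆ U₁ → s₂ ⊆ U₂ → (U₁ ∩ U₂).Nonempty

/-- s is an orbit of F. -/
def IsOrbit (F : ℝ → Plane → Plane) (s : Set Plane) : Prop :=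
  ∃ a : Plane, s = flowOrbit F a

/-- A separatrix: an orbit inseparable from some other orbit. -/
def IsSeparatrix (F : ℝ → Plane → Plane) (s : Set Plane) : Prop :=
  IsOrbit F s ∧ ∃ s' : Set Plane, IsOrbit F s' ∧ s' ≠ s ∧ OrbitsInseparable F s s'

/-- s₁ ≻ s₂ : the distinct inseparable orbits s₁, s₂ satisfy (p,q) ∈ P_F for some
p ∈ s₁, q ∈ s₂. -/
def OrbPrec (F : ℝ → Plane → Plane) (s₁ s₂ : Set Plane) : Prop :=
  s₁ ≠ s₂ ∧ OrbitsInseparable F s₁ s₂ ∧ ∃ p ∈ s₁, ∃ q ∈ s₂, (p, q) ∈ prolongRel F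

/-!
Since `P_F` is closed, if neither `(a, b)` nor `(b, a)` lies in `P_F` there are neighbourhoods
`A ∋ a`, `B ∋ b` with `(A × B) ∪ (B × A)` disjoint from `P_F`; the saturations of `A` and `B`
are then disjoint, since an orbit through both would give an orbit pair in `A × B` or `B × A`.
Conversely, a pair of `P_F` in `U₁ × U₂` gives an orbit running from `U₁` to `U₂`.

To pass from `(a, b) ∈ P_F` to all of `O(a) × O(b)`: the orbit pairs with times in `[0, T]`
form a closed set (compactness of `[0, T]`), which misses `(a, b)` as the orbits are distinct.
So `(a, b)` is a limit of orbit pairs `(x, F t x)` with `t ≥ T` for every `T`, and such pairs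
stay orbit pairs after moving `x` by `F s` and `F t x` by `F u`, once `T ≥ s - u`.
-/

theorem mem_flowOrbit_iff {X : Type*} {F : ℝ → X → X} {p q : X} :
    q ∈ flowOrbit F p ↔ ∃ s : ℝ, F s p = q := by
  constructor
  · rintro (⟨t, -, h⟩ | ⟨t, -, h⟩) <;> exact ⟨t, h⟩
  · rintro ⟨s, h⟩
    rcases le_total s 0 with hs | hs
    · exact Or.inl ⟨s, hs, h⟩
    · exact Or.inr ⟨s, hs, h⟩

namespace IsFlow

variable {X : Type*} [TopologicalSpace X] {F : ℝ → X → X}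

theorem continuous_apply (hF : IsFlow F) (t : ℝ) : Continuous (F t) :=
  hF.1.comp (continuous_const.prodMk continuous_id)

theorem apply_zero (hF : IsFlow F) (x : X) : F 0 x = x :=
  hF.2.1 x

theorem apply_apply (hF : IsFlow F) (t s : ℝ) (x : X) : F t (F s x) = F (t + s) x :=
  hF.2.2 t s x

end IsFlow

section Flow

variable {X : Type*} [TopologicalSpace X] {F : ℝ → X → X}

theorem self_mem_flowOrbit (hF : IsFlow F) (p : X) : p ∈ flowOrbit F p :=
  mem_flowOrbit_iff.mpr ⟨0, hF.apply_zero p⟩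

theorem flowOrbit_apply (hF : IsFlow F) (t : ℝ) (a : X) :
    flowOrbit F (F t a) = flowOrbit F a := by
  ext q
  simp only [mem_flowOrbit_iff]
  constructor
  · rintro ⟨s, rfl⟩
    exact ⟨s + t, (hF.apply_apply s t a).symm⟩
  · rintro ⟨s, rfl⟩
    exact ⟨s - t, by rw [hF.apply_apply, sub_add_cancel]⟩

theorem mk_mem_orbitRel (hF : IsFlow F) {τ σ : ℝ} (h : τ ≤ σ) (w : X) :
    (F τ w, F σ w) ∈ orbitRel F :=
  ⟨σ - τ, sub_nonneg.mpr h, by rw [hF.apply_apply, sub_add_cancel]⟩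

theorem isClosed_setOf_apply_eq_of_mem_Icc [T2Space X] (hF : IsFlow F) (T : ℝ) :
    IsClosed {z : X × X | ∃ t ∈ Icc 0 T, F t z.1 = z.2} := by
  have hgraph : IsClosed {w : Icc 0 T × (X × X) | F w.1 w.2.1 = w.2.2} :=
    isClosed_eq (hF.1.comp (continuous_subtype_val.comp continuous_fst |>.prodMk
      continuous_snd.fst)) continuous_snd.snd
  convert isClosedMap_snd_of_compactSpace _ hgraph using 1
  ext z
  simp

theorem prolongRel_subset_union [T2Space X] (hF : IsFlow F) (T : ℝ) :
    prolongRel F ⊆ {z : X × X | ∃ t ∈ Icc 0 T, F t z.1 = z.2} ∪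
      closure {z : X × X | ∃ t, T ≤ t ∧ F t z.1 = z.2} :=
  calc closure (orbitRel F)
      ⊆ closure ({z : X × X | ∃ t ∈ Icc 0 T, F t z.1 = z.2} ∪
          {z : X × X | ∃ t, T ≤ t ∧ F t z.1 = z.2}) := by
        refine closure_mono fun z ⟨t, ht, h⟩ => ?_
        rcases le_total t T with hT | hT
        · exact Or.inl ⟨t, ⟨ht, hT⟩, h⟩
        · exact Or.inr ⟨t, hT, h⟩
    _ = _ := by rw [closure_union, (isClosed_setOf_apply_eq_of_mem_Icc hF T).closure_eq]

theorem mem_closure_setOf_apply_eq_of_le [T2Space X] (hF : IsFlow F) {a b : X}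
    (hne : flowOrbit F a ≠ flowOrbit F b) (hab : (a, b) ∈ prolongRel F) (T : ℝ) :
    (a, b) ∈ closure {z : X × X | ∃ t, T ≤ t ∧ F t z.1 = z.2} := by
  refine (prolongRel_subset_union hF T hab).resolve_left ?_
  rintro ⟨t, -, h : F t a = b⟩
  subst h
  exact hne (flowOrbit_apply hF t a).symm

theorem forall_mem_prolongRel_of_mem [T2Space X] (hF : IsFlow F) {a b : X}
    (hne : flowOrbit F a ≠ flowOrbit F b) (hab : (a, b) ∈ prolongRel F) :
    ∀ p ∈ flowOrbit F a, ∀ q ∈ flowOrbit F b, (p, q) ∈ prolongRel F := by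
  intro p hp q hq
  obtain ⟨s, rfl⟩ := mem_flowOrbit_iff.mp hp
  obtain ⟨u, rfl⟩ := mem_flowOrbit_iff.mp hq
  refine map_mem_closure (f := Prod.map (F s) (F u)) ((hF.continuous_apply s).prodMap (hF.continuous_apply u))
    (mem_closure_setOf_apply_eq_of_le hF hne hab (s - u)) ?_
  rintro ⟨x, y⟩ ⟨t, ht, hxy : F t x = y⟩
  subst hxy
  refine ⟨t + u - s, by linarith, ?_⟩
  change F (t + u - s) (F s x) = F u (F t x)
  rw [hF.apply_apply, hF.apply_apply, sub_add_cancel, add_comm]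

def flowSaturation (F : ℝ → X → X) (A : Set X) : Set X :=
  ⋃ t : ℝ, F t ⁻¹' A

theorem isOpen_flowSaturation (hF : IsFlow F) {A : Set X} (hA : IsOpen A) :
    IsOpen (flowSaturation F A) :=
  isOpen_iUnion fun t => hA.preimage (hF.continuous_apply t)

theorem flowOrbit_subset_flowSaturation (hF : IsFlow F) {A : Set X} {a : X} (ha : a ∈ A) :
    flowOrbit F a ⊆ flowSaturation F A := by
  intro q hq
  obtain ⟨s, rfl⟩ := mem_flowOrbit_iff.mp hq
  refine mem_iUnion.mpr ⟨-s, ?_⟩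
  rwa [mem_preimage, hF.apply_apply, neg_add_cancel, hF.apply_zero]

end Flow

section Plane

variable {F : ℝ → Plane → Plane}

theorem flowSaturated_flowSaturation (hF : IsFlow F) (A : Set Plane) :
    FlowSaturated F (flowSaturation F A) := by
  intro p hp q hq
  obtain ⟨τ, hτ⟩ := mem_iUnion.mp hp
  obtain ⟨s, rfl⟩ := mem_flowOrbit_iff.mp hq
  refine mem_iUnion.mpr ⟨τ - s, ?_⟩
  rwa [mem_preimage, hF.apply_apply, sub_add_cancel]

theorem OrbitsInseparable.symm {s₁ s₂ : Set Plane} (h : OrbitsInseparable F s₁ s₂) :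
    OrbitsInseparable F s₂ s₁ := by
  intro U₁ U₂ o₁ o₂ sat₁ sat₂ sub₁ sub₂
  rw [inter_comm]
  exact h U₂ U₁ o₂ o₁ sat₂ sat₁ sub₂ sub₁

theorem orbitsInseparable_of_mem_prolongRel (hF : IsFlow F) {a b : Plane}
    (hab : (a, b) ∈ prolongRel F) : OrbitsInseparable F (flowOrbit F a) (flowOrbit F b) := by
  intro U₁ U₂ o₁ o₂ sat₁ _ sub₁ sub₂
  obtain ⟨⟨x, y⟩, ⟨hx, hy⟩, t, -, hxy : F t x = y⟩ := mem_closure_iff.mp hab (U₁ ×ˢ U₂)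
    (o₁.prod o₂) ⟨sub₁ (self_mem_flowOrbit hF a), sub₂ (self_mem_flowOrbit hF b)⟩
  subst hxy
  exact ⟨F t x, sat₁ x hx (mem_flowOrbit_iff.mpr ⟨t, rfl⟩), hy⟩

theorem mem_prolongRel_or_of_orbitsInseparable (hF : IsFlow F) {a b : Plane}
    (h : OrbitsInseparable F (flowOrbit F a) (flowOrbit F b)) :
    (a, b) ∈ prolongRel F ∨ (b, a) ∈ prolongRel F := by
  by_contra! hnot
  have hopen : IsOpen {z : Plane × Plane | z ∉ prolongRel F ∧ z.swap ∉ prolongRel F} :=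
    isClosed_closure.isOpen_compl.inter
      (isClosed_closure.isOpen_compl.preimage continuous_swap)
  obtain ⟨A, B, hA, hB, ha, hb, hAB⟩ := isOpen_prod_iff.mp hopen a b hnot
  obtain ⟨w, hwA, hwB⟩ := h _ _ (isOpen_flowSaturation hF hA) (isOpen_flowSaturation hF hB)
    (flowSaturated_flowSaturation hF A) (flowSaturated_flowSaturation hF B)
    (flowOrbit_subset_flowSaturation hF ha) (flowOrbit_subset_flowSaturation hF hb)
  obtain ⟨τ, hτ⟩ := mem_iUnion.mp hwA
  obtain ⟨σ, hσ⟩ := mem_iUnion.mp hwB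
  rcases le_total τ σ with hτσ | hστ
  · exact (hAB (mk_mem_prod hτ hσ)).1 (subset_closure (mk_mem_orbitRel hF hτσ w))
  · exact (hAB (mk_mem_prod hτ hσ)).2 (subset_closure (mk_mem_orbitRel hF hστ w))

end Plane

theorem stmt_10_general (F : ℝ → Plane → Plane) (hF : IsFlow F)
    (a b : Plane) (hne : flowOrbit F a ≠ flowOrbit F b) :
    OrbitsInseparable F (flowOrbit F a) (flowOrbit F b) ↔
      ((∀ p ∈ flowOrbit F a, ∀ q ∈ flowOrbit F b, (p, q) ∈ prolongRel F) ∨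
       (∀ p ∈ flowOrbit F b, ∀ q ∈ flowOrbit F a, (p, q) ∈ prolongRel F)) := by
  constructor
  · intro h
    exact (mem_prolongRel_or_of_orbitsInseparable hF h).imp
      (forall_mem_prolongRel_of_mem hF hne) (forall_mem_prolongRel_of_mem hF hne.symm)
  · rintro (h | h)
    · exact orbitsInseparable_of_mem_prolongRel hF
        (h a (self_mem_flowOrbit hF a) b (self_mem_flowOrbit hF b))
    · exact (orbitsInseparable_of_mem_prolongRel hF
        (h b (self_mem_flowOrbit hF b) a (self_mem_flowOrbit hF a))).symm

/-- Two distinct orbits are inseparable iff, possibly after exchanging them, every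
point of the first is prolongationally related to every point of the second. -/
theorem stmt_10 (F : ℝ → Plane → Plane) (hF : IsFlow F) (hreg : IsRegularFlow F)
    (a b : Plane) (hne : flowOrbit F a ≠ flowOrbit F b) :
    OrbitsInseparable F (flowOrbit F a) (flowOrbit F b) ↔
      ((∀ p ∈ flowOrbit F a, ∀ q ∈ flowOrbit F b, (p, q) ∈ prolongRel F) ∨
       (∀ p ∈ flowOrbit F b, ∀ q ∈ flowOrbit F a, (p, q) ∈ prolongRel F)) :=
  stmt_10_general F hF a b hne
end
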